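/- If G is a triangle-free graph in W₂ with independence number d = α(G), then the reduced Euler characteristic of the independence complex Δ(G) equals (−1)^{d−1}; that is, Σ_{F independent in G} (−1)^{|F|−1} = (−1)^{α(G)−1} (sum over all independent sets including the empty set, which contributes −1). -/

import Mathlib

open Finset

section EdgeIdealPaper

variable {V : Type*} [Fintype V] [DecidableEq V]

/-- `S` is an independent set of vertices in `G`. -/
def IsIndep (G : SimpleGraph V) (S : Finset V) : Prop :=
  ∀ u ∈ S, ∀ v ∈ S, ¬ G.Adj u v

/-- `S` is a maximal independent set of the induced subgraph of `G` on `A`. -/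
def IsMaxIndepIn (G : SimpleGraph V) (A S : Finset V) : Prop :=
  S ⊆ A ∧ IsIndep G S ∧ ∀ v ∈ A, v ∉ S → ¬ IsIndep G (insert v S)

open scoped Classical in
/-- The independence number of the induced subgraph of `G` on `A`. -/
noncomputable def alphaIn (G : SimpleGraph V) (A : Finset V) : ℕ :=
  ((A.powerset).filter (fun S => IsIndep G S)).sup Finset.card

/-- The induced subgraph of `G` on `A` is well-covered. -/
def WellCoveredIn (G : SimpleGraph V) (A : Finset V) : Prop :=
  ∀ S, IsMaxIndepIn G A S → S.card = alphaIn G A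

/-- The induced subgraph of `G` on `A` is in the class `W₂`. -/
def W2In (G : SimpleGraph V) (A : Finset V) : Prop :=
  WellCoveredIn G A ∧
    ∀ x ∈ A, WellCoveredIn G (A.erase x) ∧ alphaIn G (A.erase x) = alphaIn G A

open scoped Classical in
/-- The neighborhood of a vertex `a` in `G`, as a `Finset`. -/
noncomputable def nbr (G : SimpleGraph V) (a : V) : Finset V :=
  univ.filter (fun v => G.Adj a v)

open scoped Classical in
/-- The neighborhood `N_G(S)` of a set `S` of vertices: vertices outside `S`
adjacent to some vertex of `S`. -/
noncomputable def nbrSet (G : SimpleGraph V) (S : Finset V) : Finset V :=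
  univ.filter (fun v => v ∉ S ∧ ∃ u ∈ S, G.Adj u v)

/-- The vertex set of the localization `G_S = G \ (S ∪ N_G(S))`. -/
noncomputable def loc (G : SimpleGraph V) (S : Finset V) : Finset V :=
  univ \ (S ∪ nbrSet G S)

/-- The vertex set of `G_{ab} = G \ (N_G(a) ∪ N_G(b))`. -/
noncomputable def locE (G : SimpleGraph V) (a b : V) : Finset V :=
  univ \ (nbr G a ∪ nbr G b)

/-- The induced subgraph of `G` on `A` has no isolated vertices. -/
def NoIsolatedIn (G : SimpleGraph V) (A : Finset V) : Prop :=
  ∀ v ∈ A, ∃ u ∈ A, G.Adj v u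

open scoped Classical in
/-- The reduced Euler characteristic `∑_{F} (-1)^{|F|-1}` (the empty face
contributing `-1`) of the independence complex of the induced subgraph of `G` on `A`. -/
noncomputable def indEuler (G : SimpleGraph V) (A : Finset V) : ℤ :=
  -∑ S ∈ (A.powerset).filter (fun S => IsIndep G S), (-1 : ℤ) ^ S.card

end EdgeIdealPaper

/-!
Write `I(A) = ∑_{F ⊆ A independent} (-1)^|F|`, so that `indEuler = -I`, and `A_T` for the
localization of `A` at an independent set `T`. Inclusion–exclusion gives
`I(A \ S) = ∑_{T ⊆ S} I(A_T)` for every independent `S ⊆ A`. Take `S = N(v) ∩ A`: it is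
independent because `G` is triangle-free, and nonempty because a graph in `W₂` has no isolated
vertices. The left side vanishes since `v` is isolated in `A \ S`. By Staples' lemma each `A_T`
is again in `W₂` with `α(A_T) = α(A) - |T|`, so induction on `α` gives
`I(A_T) = (-1)^(α(A) - |T|)` for `T ≠ ∅`, and since `∑_{T ⊆ S} (-1)^|T| = 0` this forces
`I(A) = (-1)^α(A)`.
-/

section Independence

open scoped Classical

variable {V : Type*} {G : SimpleGraph V}

lemma IsIndep.mono {S T : Finset V} (h : IsIndep G T) (hST : S ⊆ T) : IsIndep G S :=
  fun u hu v hv => h u (hST hu) v (hST hv)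

lemma isIndep_empty : IsIndep G (∅ : Finset V) := by simp [IsIndep]

lemma isIndep_singleton (v : V) : IsIndep G {v} := by
  simp [IsIndep]

lemma card_le_alphaIn {A S : Finset V} (hSA : S ⊆ A) (hS : IsIndep G S) :
    S.card ≤ alphaIn G A :=
  Finset.le_sup (f := Finset.card) (by simp [hSA, hS])

lemma alphaIn_le {A : Finset V} {n : ℕ} (h : ∀ S ⊆ A, IsIndep G S → S.card ≤ n) :
    alphaIn G A ≤ n :=
  Finset.sup_le fun S hS => by
    rw [Finset.mem_filter, Finset.mem_powerset] at hS
    exact h S hS.1 hS.2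

lemma alphaIn_empty : alphaIn G ∅ = 0 := by simp [alphaIn]

lemma exists_isMaxIndepIn [DecidableEq V] (G : SimpleGraph V) (A : Finset V) :
    ∃ M, IsMaxIndepIn G A M := by
  obtain ⟨M, hM, hmax⟩ := Finset.exists_max_image
    ((A.powerset).filter (IsIndep G)) Finset.card ⟨∅, by simp [isIndep_empty]⟩
  rw [Finset.mem_filter, Finset.mem_powerset] at hM
  refine ⟨M, hM.1, hM.2, fun v hv hvM hind => ?_⟩
  have := hmax (insert v M) (by simp [Finset.insert_subset hv hM.1, hind])
  rw [Finset.card_insert_of_notMem hvM] at this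
  omega

end Independence

section Localization

open scoped Classical

variable {V : Type*} [DecidableEq V] {G : SimpleGraph V}

/-- `loc` (the localization `G_T`), relativized to the induced subgraph on `A`. -/
noncomputable def locIn (G : SimpleGraph V) (A T : Finset V) : Finset V :=
  A.filter fun w => w ∉ T ∧ ∀ t ∈ T, ¬ G.Adj t w

@[simp]
lemma mem_locIn {A T : Finset V} {w : V} :
    w ∈ locIn G A T ↔ w ∈ A ∧ w ∉ T ∧ ∀ t ∈ T, ¬ G.Adj t w := by
  simp [locIn]

lemma locIn_subset (A T : Finset V) : locIn G A T ⊆ A := Finset.filter_subset _ _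

@[simp]
lemma locIn_empty (A : Finset V) : locIn G A ∅ = A := by
  ext; simp

lemma locIn_erase (A T : Finset V) (x : V) :
    (locIn G A T).erase x = locIn G (A.erase x) T := by
  ext; simp only [Finset.mem_erase, mem_locIn]; tauto

lemma locIn_singleton_of_forall_not_adj {A : Finset V} {v : V} (hv : ∀ u ∈ A, ¬ G.Adj v u) :
    locIn G A {v} = A.erase v := by
  ext w; simp only [mem_locIn, Finset.mem_erase, Finset.mem_singleton, forall_eq]
  exact ⟨fun h => ⟨h.2.1, h.1⟩, fun h => ⟨h.2, h.1, hv w h.2⟩⟩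

lemma IsIndep.union_of_subset_locIn {A T S : Finset V} (hT : IsIndep G T) (hS : IsIndep G S)
    (hSA : S ⊆ locIn G A T) : IsIndep G (T ∪ S) := by
  have hST : ∀ s ∈ S, ∀ t ∈ T, ¬ G.Adj t s := fun s hs => (mem_locIn.1 (hSA hs)).2.2
  intro a ha b hb hab
  rcases Finset.mem_union.1 ha with haT | haS <;> rcases Finset.mem_union.1 hb with hbT | hbS
  · exact hT a haT b hbT hab
  · exact hST b hbS a haT hab
  · exact hST a haS b hbT hab.symm
  · exact hS a haS b hbS hab

lemma IsMaxIndepIn.union_locIn {A T S : Finset V} (hTA : T ⊆ A) (hT : IsIndep G T)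
    (hS : IsMaxIndepIn G (locIn G A T) S) : IsMaxIndepIn G A (T ∪ S) := by
  obtain ⟨hSA, hSi, hSmax⟩ := hS
  refine ⟨Finset.union_subset hTA (hSA.trans (locIn_subset A T)),
    hT.union_of_subset_locIn hSi hSA, fun w hwA hw hind => ?_⟩
  rw [Finset.mem_union, not_or] at hw
  by_cases hadj : ∃ t ∈ T, G.Adj t w
  · obtain ⟨t, ht, htw⟩ := hadj
    exact hind t (by simp [ht]) w (Finset.mem_insert_self _ _) htw
  · push Not at hadj
    refine hSmax w (mem_locIn.2 ⟨hwA, hw.1, hadj⟩) hw.2 (hind.mono ?_)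
    exact Finset.insert_subset_insert w Finset.subset_union_right

lemma alphaIn_locIn_add_card_le {A T : Finset V} (hTA : T ⊆ A) (hT : IsIndep G T) :
    alphaIn G (locIn G A T) + T.card ≤ alphaIn G A := by
  suffices ∀ S ⊆ locIn G A T, IsIndep G S → S.card ≤ alphaIn G A - T.card by
    have hT_le := card_le_alphaIn hTA hT
    have hloc_le := alphaIn_le this
    omega
  intro S hSA hS
  have hdisj : Disjoint T S := Finset.disjoint_right.2 fun s hs => (mem_locIn.1 (hSA hs)).2.1
  have := card_le_alphaIn (Finset.union_subset hTA (hSA.trans (locIn_subset A T)))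
    (hT.union_of_subset_locIn hS hSA)
  rw [Finset.card_union_of_disjoint hdisj] at this
  omega

lemma WellCoveredIn.wellCoveredIn_locIn {A T : Finset V} (h : WellCoveredIn G A) (hTA : T ⊆ A)
    (hT : IsIndep G T) :
    WellCoveredIn G (locIn G A T) ∧ alphaIn G (locIn G A T) + T.card = alphaIn G A := by
  have hcard : ∀ S, IsMaxIndepIn G (locIn G A T) S → S.card + T.card = alphaIn G A := by
    intro S hS
    have hdisj : Disjoint T S :=
      Finset.disjoint_right.2 fun s hs => (mem_locIn.1 (hS.1 hs)).2.1
    rw [← h _ (hS.union_locIn hTA hT), Finset.card_union_of_disjoint hdisj, add_comm]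
  obtain ⟨M, hM⟩ := exists_isMaxIndepIn G (locIn G A T)
  have hMle := card_le_alphaIn hM.1 hM.2.1
  have hle := alphaIn_locIn_add_card_le hTA hT
  have hMcard := hcard M hM
  exact ⟨fun S hS => by have := hcard S hS; omega, by omega⟩

lemma W2In.w2In_locIn {A T : Finset V} (h : W2In G A) (hTA : T ⊆ A) (hT : IsIndep G T) :
    W2In G (locIn G A T) ∧ alphaIn G (locIn G A T) + T.card = alphaIn G A := by
  obtain ⟨hwc, halpha⟩ := h.1.wellCoveredIn_locIn hTA hT
  refine ⟨⟨hwc, fun x hx => ?_⟩, halpha⟩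
  have hxT : x ∉ T := (mem_locIn.1 hx).2.1
  obtain ⟨hwcx, halphax⟩ := h.2 x (locIn_subset A T hx)
  obtain ⟨hwc', halpha'⟩ := hwcx.wellCoveredIn_locIn (Finset.subset_erase.2 ⟨hTA, hxT⟩) hT
  rw [locIn_erase]
  exact ⟨hwc', by omega⟩

lemma W2In.exists_adj {A : Finset V} (h : W2In G A) {v : V} (hv : v ∈ A) :
    ∃ u ∈ A, G.Adj v u := by
  by_contra! hiso
  have hvA : ({v} : Finset V) ⊆ A := Finset.singleton_subset_iff.2 hv
  have hα := (h.1.wellCoveredIn_locIn hvA (isIndep_singleton v)).2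
  rw [locIn_singleton_of_forall_not_adj hiso, (h.2 v hv).2, Finset.card_singleton] at hα
  omega

end Localization

section IndependencePolynomial

open scoped Classical

variable {V : Type*} {G : SimpleGraph V}

/-- The independence polynomial of the induced subgraph on `A`, evaluated at `-1`;
`indEuler G A` is its negative. -/
noncomputable def indepPolyAtNegOne (G : SimpleGraph V) (A : Finset V) : ℤ :=
  ∑ S ∈ (A.powerset).filter (IsIndep G), (-1 : ℤ) ^ S.card

lemma indepPolyAtNegOne_empty : indepPolyAtNegOne G ∅ = 1 := by
  rw [indepPolyAtNegOne, Finset.powerset_empty, Finset.filter_singleton, if_pos isIndep_empty,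
    Finset.sum_singleton, Finset.card_empty, pow_zero]

variable [DecidableEq V]

lemma indepPolyAtNegOne_locIn {A T : Finset V} (hTA : T ⊆ A) (hT : IsIndep G T) :
    indepPolyAtNegOne G (locIn G A T) =
      (-1) ^ T.card *
        ∑ F ∈ (A.powerset).filter (fun F => IsIndep G F ∧ T ⊆ F), (-1) ^ F.card := by
  rw [indepPolyAtNegOne, Finset.mul_sum]
  refine Finset.sum_nbij' (T ∪ ·) (· \ T) (fun S hS => ?_) (fun F hF => ?_) (fun S hS => ?_)
    (fun F hF => ?_) (fun S hS => ?_)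
  all_goals simp only [Finset.mem_filter, Finset.mem_powerset] at *
  · exact ⟨Finset.union_subset hTA (hS.1.trans (locIn_subset A T)),
      hT.union_of_subset_locIn hS.2 hS.1, Finset.subset_union_left⟩
  · refine ⟨fun w hw => ?_, hF.2.1.mono Finset.sdiff_subset⟩
    rw [Finset.mem_sdiff] at hw
    exact mem_locIn.2 ⟨hF.1 hw.1, hw.2, fun t ht => hF.2.1 t (hF.2.2 ht) w hw.1⟩
  · exact Finset.union_sdiff_cancel_left
      (Finset.disjoint_right.2 fun s hs => (mem_locIn.1 (hS.1 hs)).2.1)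
  · exact Finset.union_sdiff_of_subset hF.2.2
  · have hdisj : Disjoint T S := Finset.disjoint_right.2 fun s hs => (mem_locIn.1 (hS.1 hs)).2.1
    rw [Finset.card_union_of_disjoint hdisj, pow_add, ← mul_assoc, ← pow_add,
      Even.neg_one_pow ⟨_, rfl⟩, one_mul]

/-- After swapping the sums, a face `F` is weighted by `∑_{T ⊆ F ∩ S} (-1)^|T|`, which vanishes
unless `F ∩ S = ∅`. -/
lemma indepPolyAtNegOne_sdiff {A S : Finset V} (hSA : S ⊆ A) (hS : IsIndep G S) :
    indepPolyAtNegOne G (A \ S) = ∑ T ∈ S.powerset, indepPolyAtNegOne G (locIn G A T) := by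
  have hswap := Finset.sum_comm' (s := S.powerset)
    (t := fun T => (A.powerset).filter (fun F => IsIndep G F ∧ T ⊆ F))
    (t' := (A.powerset).filter (IsIndep G)) (s' := fun F => (S ∩ F).powerset)
    (f := fun T F => (-1 : ℤ) ^ T.card * (-1) ^ F.card)
    (fun T F => by
      simp only [Finset.mem_filter, Finset.mem_powerset, Finset.subset_inter_iff]
      tauto)
  rw [Finset.sum_congr rfl fun T hT =>
      indepPolyAtNegOne_locIn ((Finset.mem_powerset.1 hT).trans hSA)
        (hS.mono (Finset.mem_powerset.1 hT))]
  simp_rw [Finset.mul_sum]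
  rw [hswap]
  simp only [← Finset.sum_mul, Finset.sum_powerset_neg_one_pow_card, ite_mul, one_mul, zero_mul]
  rw [← Finset.sum_filter, indepPolyAtNegOne]
  congr 1
  ext F
  simp only [Finset.mem_filter, Finset.mem_powerset, Finset.subset_sdiff,
    ← Finset.disjoint_iff_inter_eq_empty, disjoint_comm]
  tauto

lemma indepPolyAtNegOne_eq_zero_of_forall_not_adj {A : Finset V} {v : V} (hv : v ∈ A)
    (hiso : ∀ u ∈ A, ¬ G.Adj v u) : indepPolyAtNegOne G A = 0 := by
  have h := indepPolyAtNegOne_sdiff (G := G) (Finset.singleton_subset_iff.2 hv)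
    (isIndep_singleton v)
  rw [← insert_empty_eq v, Finset.sum_powerset_insert (Finset.notMem_empty v)] at h
  simp only [Finset.powerset_empty, Finset.sum_singleton, Finset.insert_empty, locIn_empty,
    locIn_singleton_of_forall_not_adj hiso, Finset.sdiff_singleton_eq_erase] at h
  linarith

end IndependencePolynomial

section TriangleFree

open scoped Classical

variable {V : Type*} [DecidableEq V] {G : SimpleGraph V}

lemma SimpleGraph.CliqueFree.isIndep_filter_adj (h : G.CliqueFree 3) (A : Finset V) (v : V) :
    IsIndep G (A.filter (G.Adj v)) := by
  intro a ha b hb hab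
  rw [Finset.mem_filter] at ha hb
  exact h {v, a, b} (SimpleGraph.is3Clique_triple_iff.2 ⟨ha.2, hb.2, hab⟩)

theorem W2In.indepPolyAtNegOne_eq (htf : G.CliqueFree 3) {A : Finset V} (hw2 : W2In G A) :
    indepPolyAtNegOne G A = (-1) ^ alphaIn G A := by
  induction hd : alphaIn G A using Nat.strong_induction_on generalizing A with
  | _ d ih =>
  rcases A.eq_empty_or_nonempty with rfl | ⟨v, hv⟩
  · rw [← hd, alphaIn_empty, indepPolyAtNegOne_empty, pow_zero]
  set S := A.filter (G.Adj v)
  have hSA : S ⊆ A := Finset.filter_subset _ _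
  have hS : IsIndep G S := htf.isIndep_filter_adj A v
  have hSne : S.Nonempty := by
    obtain ⟨u, hu, hvu⟩ := hw2.exists_adj hv
    exact ⟨u, Finset.mem_filter.2 ⟨hu, hvu⟩⟩
  have hloc : ∀ T ∈ S.powerset, T ≠ ∅ →
      indepPolyAtNegOne G (locIn G A T) = (-1) ^ d * (-1) ^ T.card := by
    intro T hT hTne
    rw [Finset.mem_powerset] at hT
    obtain ⟨hw2T, hαT⟩ := hw2.w2In_locIn (hT.trans hSA) (hS.mono hT)
    have hTpos := Finset.card_pos.2 (Finset.nonempty_iff_ne_empty.2 hTne)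
    rw [ih _ (by omega) hw2T rfl, ← hd, ← hαT, pow_add, mul_assoc, ← pow_add,
      Even.neg_one_pow ⟨_, rfl⟩, mul_one]
  have hzero : indepPolyAtNegOne G (A \ S) = 0 := by
    refine indepPolyAtNegOne_eq_zero_of_forall_not_adj (v := v)
      (Finset.mem_sdiff.2 ⟨hv, by simp [S]⟩) fun u hu hvu => ?_
    rw [Finset.mem_sdiff] at hu
    exact hu.2 (Finset.mem_filter.2 ⟨hu.1, hvu⟩)
  have hsum := Finset.sum_eq_single_of_mem
    (f := fun T => indepPolyAtNegOne G (locIn G A T) - (-1) ^ d * (-1) ^ T.card) ∅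
    (Finset.empty_mem_powerset S) (fun T hT hTne => sub_eq_zero.2 (hloc T hT hTne))
  rw [Finset.sum_sub_distrib, ← indepPolyAtNegOne_sdiff hSA hS, hzero, ← Finset.mul_sum,
    Finset.sum_powerset_neg_one_pow_card, if_neg hSne.ne_empty] at hsum
  simp only [locIn_empty, Finset.card_empty, pow_zero, mul_one, mul_zero, sub_zero] at hsum
  linarith

end TriangleFree

section EdgeIdealPaper

variable {V : Type*} [Fintype V] [DecidableEq V]

/-- If `G` is a triangle-free graph in `W₂`, then the reduced Euler characteristic
`∑_{F independent} (-1)^{|F|-1}` of the independence complex equals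
`(-1)^{α(G)-1} = -(-1)^{α(G)}`. -/
theorem stmt9 (G : SimpleGraph V) (htf : G.CliqueFree 3)
    (hw2 : W2In G Finset.univ) :
    indEuler G Finset.univ = -(-1 : ℤ) ^ alphaIn G Finset.univ :=
  congrArg Neg.neg (hw2.indepPolyAtNegOne_eq htf)

end EdgeIdealPaper
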